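/- arXiv:2007.15220 — 2 statements merged into one kernel-verified Lean document; each statement's English description precedes it below -/
import Mathlib

section
/- Let p ≥ 2 and q satisfy 1/p + 1/q = 1. For any nonzero w ∈ ℝ^d, any γ ≥ 0, any x ∈ ℝ^d and y ∈ {±1}: there exists z with ‖z − x‖_p ≤ γ and sgn(⟨w, z⟩) ≠ y if and only if sgn(⟨w/‖w‖_q, x⟩ − yγ) ≠ y, where sgn(u) = 1 if u ≥ 0 and −1 otherwise. -/
open Finset

noncomputable def lpNorm {d : ℕ} (p : ℝ) (v : Fin d → ℝ) : ℝ :=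
  (∑ i, |v i| ^ p) ^ (1 / p)

noncomputable def sgn (u : ℝ) : ℝ := if 0 ≤ u then 1 else -1

/-! By Hölder's inequality, moving `x` by at most `γ` in `L_p` changes `⟨w, x⟩` by at most
`γ ‖w‖_q`, and the dual vector `(sign wᵢ |wᵢ|^(q-1))ᵢ`, rescaled, attains this change in either
direction. So the values of `⟨w, z⟩` on the ball are exactly `[⟨w, x⟩ - γ ‖w‖_q, ⟨w, x⟩ + γ ‖w‖_q]`,
and some `z` is misclassified iff the endpoint on the side opposite to `y` is. -/

section LpNorm

variable {d : ℕ} {p q : ℝ}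

lemma lpNorm_nonneg (p : ℝ) (v : Fin d → ℝ) : 0 ≤ lpNorm p v := by
  unfold lpNorm; positivity

lemma lpNorm_pos (p : ℝ) {v : Fin d → ℝ} (hv : v ≠ 0) : 0 < lpNorm p v := by
  obtain ⟨j, hj⟩ := Function.ne_iff.mp hv
  refine Real.rpow_pos_of_pos (sum_pos' (fun i _ => by positivity) ⟨j, mem_univ j, ?_⟩) _
  exact Real.rpow_pos_of_pos (abs_pos.mpr hj) p

lemma lpNorm_rpow (hp : p ≠ 0) (v : Fin d → ℝ) : lpNorm p v ^ p = ∑ i, |v i| ^ p := by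
  rw [lpNorm, ← Real.rpow_mul (by positivity), one_div_mul_cancel hp, Real.rpow_one]

lemma lpNorm_smul (hp : 0 < p) (c : ℝ) (v : Fin d → ℝ) :
    lpNorm p (c • v) = |c| * lpNorm p v := by
  simp only [lpNorm, Pi.smul_apply, smul_eq_mul, abs_mul,
    Real.mul_rpow (abs_nonneg _) (abs_nonneg _), ← mul_sum]
  rw [Real.mul_rpow (by positivity) (by positivity), ← Real.rpow_mul (abs_nonneg _),
    mul_one_div_cancel hp.ne', Real.rpow_one]

lemma lpNorm_neg (p : ℝ) (v : Fin d → ℝ) : lpNorm p (-v) = lpNorm p v := by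
  simp [lpNorm]

theorem abs_sum_mul_le_lpNorm_mul_lpNorm (hpq : p.HolderConjugate q) (w v : Fin d → ℝ) :
    |∑ i, w i * v i| ≤ lpNorm q w * lpNorm p v := by
  have holder := fun v : Fin d → ℝ => Real.inner_le_Lp_mul_Lq univ w v hpq.symm
  refine abs_le.mpr ⟨?_, holder v⟩
  have h := holder (-v)
  simp only [Pi.neg_apply, mul_neg, sum_neg_distrib, abs_neg] at h
  unfold lpNorm
  linarith

end LpNorm

section Dual

variable {d : ℕ} {p q : ℝ}

lemma mul_sign_mul_abs_rpow_sub_one (hq : q ≠ 0) (a : ℝ) :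
    a * (SignType.sign a * |a| ^ (q - 1)) = |a| ^ q := by
  rcases eq_or_ne a 0 with rfl | ha
  · simp [Real.zero_rpow hq]
  rw [← mul_assoc, self_mul_sign, Real.rpow_sub_one (abs_ne_zero.mpr ha),
    mul_div_cancel₀ _ (abs_ne_zero.mpr ha)]

lemma abs_sign_mul_abs_rpow_sub_one_rpow (hpq : p.HolderConjugate q) (a : ℝ) :
    |SignType.sign a * |a| ^ (q - 1)| ^ p = |a| ^ q := by
  rcases eq_or_ne a 0 with rfl | ha
  · simp [Real.zero_rpow hpq.ne_zero, Real.zero_rpow hpq.symm.ne_zero]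
  have : |(SignType.sign a : ℝ)| = 1 := by rcases ha.lt_or_gt with h | h <;> simp [h]
  rw [abs_mul, this, one_mul, abs_of_nonneg (by positivity), ← Real.rpow_mul (abs_nonneg a),
    hpq.symm.sub_one_mul_conj]

noncomputable def lpDual (q : ℝ) (w : Fin d → ℝ) : Fin d → ℝ :=
  fun i => SignType.sign (w i) * |w i| ^ (q - 1)

lemma sum_mul_lpDual (hq : q ≠ 0) (w : Fin d → ℝ) :
    ∑ i, w i * lpDual q w i = lpNorm q w ^ q := by
  simp only [lpDual, mul_sign_mul_abs_rpow_sub_one hq, lpNorm_rpow hq]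

lemma lpNorm_lpDual (hpq : p.HolderConjugate q) (w : Fin d → ℝ) :
    lpNorm p (lpDual q w) = lpNorm q w ^ (q - 1) := by
  rw [lpNorm]
  simp only [lpDual, abs_sign_mul_abs_rpow_sub_one_rpow hpq]
  rw [← lpNorm_rpow hpq.symm.ne_zero, ← Real.rpow_mul (lpNorm_nonneg q w), mul_one_div,
    hpq.symm.div_conj_eq_sub_one]

theorem exists_lpNorm_eq_sum_mul_eq (hpq : p.HolderConjugate q) {w : Fin d → ℝ} (hw : w ≠ 0)
    {γ : ℝ} (hγ : 0 ≤ γ) : ∃ δ : Fin d → ℝ, lpNorm p δ = γ ∧ ∑ i, w i * δ i = γ * lpNorm q w := by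
  have hN := lpNorm_pos q hw
  refine ⟨(γ / lpNorm q w ^ (q - 1)) • lpDual q w, ?_, ?_⟩
  · rw [lpNorm_smul hpq.pos, lpNorm_lpDual hpq, abs_of_nonneg (by positivity),
      div_mul_cancel₀ _ (by positivity)]
  · simp only [Pi.smul_apply, smul_eq_mul, mul_left_comm (w _), ← mul_sum,
      sum_mul_lpDual hpq.symm.ne_zero, Real.rpow_sub_one hN.ne']
    field_simp

end Dual

section Ball

variable {d : ℕ} {p q γ : ℝ} {w x : Fin d → ℝ}

lemma abs_sum_mul_sub_sum_mul_le (hpq : p.HolderConjugate q) {z : Fin d → ℝ}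
    (hz : lpNorm p (z - x) ≤ γ) : |∑ i, w i * z i - ∑ i, w i * x i| ≤ γ * lpNorm q w := by
  have h := abs_sum_mul_le_lpNorm_mul_lpNorm hpq w (z - x)
  simp only [Pi.sub_apply, mul_sub, sum_sub_distrib] at h
  nlinarith [mul_le_mul_of_nonneg_left hz (lpNorm_nonneg q w)]

theorem exists_lpNorm_sub_le_sum_mul_lt_iff (hpq : p.HolderConjugate q) (hw : w ≠ 0)
    (hγ : 0 ≤ γ) (c : ℝ) :
    (∃ z, lpNorm p (z - x) ≤ γ ∧ ∑ i, w i * z i < c) ↔ ∑ i, w i * x i - γ * lpNorm q w < c := by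
  constructor
  · rintro ⟨z, hz, hzc⟩
    linarith [(abs_le.mp (abs_sum_mul_sub_sum_mul_le (w := w) hpq hz)).1]
  · intro h
    obtain ⟨δ, hδ, hwδ⟩ := exists_lpNorm_eq_sum_mul_eq hpq hw hγ
    refine ⟨x - δ, by rw [sub_sub_cancel_left, lpNorm_neg, hδ], ?_⟩
    simpa only [Pi.sub_apply, mul_sub, sum_sub_distrib, hwδ] using h

theorem exists_lpNorm_sub_le_le_sum_mul_iff (hpq : p.HolderConjugate q) (hw : w ≠ 0)
    (hγ : 0 ≤ γ) (c : ℝ) :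
    (∃ z, lpNorm p (z - x) ≤ γ ∧ c ≤ ∑ i, w i * z i) ↔ c ≤ ∑ i, w i * x i + γ * lpNorm q w := by
  constructor
  · rintro ⟨z, hz, hzc⟩
    linarith [(abs_le.mp (abs_sum_mul_sub_sum_mul_le (w := w) hpq hz)).2]
  · intro h
    obtain ⟨δ, hδ, hwδ⟩ := exists_lpNorm_eq_sum_mul_eq hpq hw hγ
    refine ⟨x + δ, by rw [add_sub_cancel_left, hδ], ?_⟩
    simpa only [Pi.add_apply, mul_add, sum_add_distrib, hwδ] using h

end Ball

lemma sgn_ne_one_iff (u : ℝ) : sgn u ≠ 1 ↔ u < 0 := by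
  rw [← not_le, sgn]; split_ifs <;> norm_num [*]

lemma sgn_ne_neg_one_iff (u : ℝ) : sgn u ≠ -1 ↔ 0 ≤ u := by
  rw [sgn]; split_ifs <;> norm_num [*]

/-- Pointwise equivalence between adversarially robust classification under
`L_p` perturbations of radius `γ` and margin-`γ` classification by the
`L_q`-normalized weight vector. -/
theorem stmt0 {d : ℕ} (p q : ℝ) (hp : 2 ≤ p) (hpq : 1 / p + 1 / q = 1)
    (w : Fin d → ℝ) (hw : w ≠ 0) (γ : ℝ) (hγ : 0 ≤ γ)
    (x : Fin d → ℝ) (y : ℝ) (hy : y = 1 ∨ y = -1) :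
    (∃ z : Fin d → ℝ, lpNorm p (z - x) ≤ γ ∧ sgn (∑ i, w i * z i) ≠ y) ↔
      sgn ((∑ i, (w i / lpNorm q w) * x i) - y * γ) ≠ y := by
  have hpq' : p.HolderConjugate q :=
    Real.holderConjugate_iff.mpr ⟨by linarith, by simpa only [one_div] using hpq⟩
  have hN := lpNorm_pos q hw
  have hx : ∑ i, w i / lpNorm q w * x i = (∑ i, w i * x i) / lpNorm q w := by
    simp only [div_mul_eq_mul_div, sum_div]
  rw [hx]
  rcases hy with rfl | rfl
  · simp only [sgn_ne_one_iff, exists_lpNorm_sub_le_sum_mul_lt_iff hpq' hw hγ]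
    rw [one_mul, sub_neg, sub_neg, div_lt_iff₀ hN]
  · simp only [sgn_ne_neg_one_iff, exists_lpNorm_sub_le_le_sum_mul_iff hpq' hw hγ]
    rw [neg_one_mul, sub_neg_eq_add, div_add' _ _ _ hN.ne', le_div_iff₀ hN, zero_mul]
end

section
/- Let u₁, u₂ be two labels (elements of a finite set), let π₁, π₂ : Σ_U → Σ_V be functions, and let φ(u₁), φ(u₂) ∈ Σ_U be independent random labels where Pr[φ(uᵢ) ∈ πᵢ^{-1}(σ_v)] ≥ k·Σ_{σ ∈ πᵢ^{-1}(σ_v)} |ŵ_{(uᵢ,σ)}| for all σ_v ∈ Σ_V. Then Σ_{σ_v ∈ Σ_V} (Σ_{σ₁ ∈ π₁^{-1}(σ_v)} ŵ_{(u₁,σ₁)})·(Σ_{σ₂ ∈ π₂^{-1}(σ_v)} ŵ_{(u₂,σ₂)}) ≤ (1/k²)·Pr[π₁(φ(u₁)) = π₂(φ(u₂))]. -/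
open Finset

/-- Decoding (cross-term) inequality: if the randomized rounding distributions
`p₁, p₂` satisfy `Pr[φᵢ ∈ πᵢ⁻¹(σᵥ)] ≥ k · ∑_{σ ∈ πᵢ⁻¹(σᵥ)} |wᵢ σ|` for all `σᵥ`,
then the cross terms are bounded by `(1/k²)` times the collision probability
`Pr[π₁(φ₁) = π₂(φ₂)]` of the independent random labels. -/
theorem stmt19 {SU SV : Type} [Fintype SU] [Fintype SV] [DecidableEq SV]
    (π₁ π₂ : SU → SV) (w₁ w₂ : SU → ℝ) (p₁ p₂ : SU → ℝ) (k : ℝ) (hk : 0 < k)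
    (hp₁ : ∀ σ, 0 ≤ p₁ σ) (hp₂ : ∀ σ, 0 ≤ p₂ σ)
    (hp₁sum : (∑ σ, p₁ σ) = 1) (hp₂sum : (∑ σ, p₂ σ) = 1)
    (h₁ : ∀ σv : SV,
      k * ∑ σ ∈ Finset.univ.filter (fun σ => π₁ σ = σv), |w₁ σ| ≤
        ∑ σ ∈ Finset.univ.filter (fun σ => π₁ σ = σv), p₁ σ)
    (h₂ : ∀ σv : SV,
      k * ∑ σ ∈ Finset.univ.filter (fun σ => π₂ σ = σv), |w₂ σ| ≤
        ∑ σ ∈ Finset.univ.filter (fun σ => π₂ σ = σv), p₂ σ) :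
    (∑ σv : SV,
        (∑ σ ∈ Finset.univ.filter (fun σ => π₁ σ = σv), w₁ σ) *
          (∑ σ ∈ Finset.univ.filter (fun σ => π₂ σ = σv), w₂ σ)) ≤
      (1 / k ^ 2) *
        ∑ σ₁ : SU, ∑ σ₂ : SU,
          (if π₁ σ₁ = π₂ σ₂ then p₁ σ₁ * p₂ σ₂ else 0) := by
  classical
  have hrw : (∑ σ₁ : SU, ∑ σ₂ : SU,
      (if π₁ σ₁ = π₂ σ₂ then p₁ σ₁ * p₂ σ₂ else 0)) =
      ∑ σv : SV,
        (∑ σ ∈ Finset.univ.filter (fun σ => π₁ σ = σv), p₁ σ) *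
          (∑ σ ∈ Finset.univ.filter (fun σ => π₂ σ = σv), p₂ σ) := by
    have hterm : ∀ σ₁ σ₂ : SU, (if π₁ σ₁ = π₂ σ₂ then p₁ σ₁ * p₂ σ₂ else 0) =
        ∑ σv : SV, (if π₁ σ₁ = σv then p₁ σ₁ else 0) *
          (if π₂ σ₂ = σv then p₂ σ₂ else 0) := by
      intro σ₁ σ₂
      by_cases h : π₁ σ₁ = π₂ σ₂ <;> simp [h, Finset.sum_ite_eq, ite_mul, mul_ite]
    simp only [hterm]
    conv_lhs => enter [2, σ₁]; rw [Finset.sum_comm]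
    rw [Finset.sum_comm]
    refine Finset.sum_congr rfl fun σv _ => ?_
    rw [Finset.sum_filter, Finset.sum_filter, Finset.sum_mul_sum]
  rw [hrw, Finset.mul_sum]
  refine Finset.sum_le_sum fun σv _ => ?_
  set A := ∑ σ ∈ Finset.univ.filter (fun σ => π₁ σ = σv), w₁ σ
  set B := ∑ σ ∈ Finset.univ.filter (fun σ => π₂ σ = σv), w₂ σ
  set s₁ := ∑ σ ∈ Finset.univ.filter (fun σ => π₁ σ = σv), |w₁ σ|
  set s₂ := ∑ σ ∈ Finset.univ.filter (fun σ => π₂ σ = σv), |w₂ σ|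
  set P₁ := ∑ σ ∈ Finset.univ.filter (fun σ => π₁ σ = σv), p₁ σ
  set P₂ := ∑ σ ∈ Finset.univ.filter (fun σ => π₂ σ = σv), p₂ σ
  have hs₁ : 0 ≤ s₁ := Finset.sum_nonneg fun _ _ => abs_nonneg _
  have hs₂ : 0 ≤ s₂ := Finset.sum_nonneg fun _ _ => abs_nonneg _
  have hP₁ : 0 ≤ P₁ := Finset.sum_nonneg fun _ _ => hp₁ _
  have hA : |A| ≤ s₁ := Finset.abs_sum_le_sum_abs _ _
  have hB : |B| ≤ s₂ := Finset.abs_sum_le_sum_abs _ _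
  calc A * B ≤ |A| * |B| := (abs_mul A B) ▸ le_abs_self _
    _ ≤ s₁ * s₂ := mul_le_mul hA hB (abs_nonneg _) hs₁
    _ ≤ 1 / k ^ 2 * (P₁ * P₂) := by
        rw [one_div, inv_mul_eq_div, le_div_iff₀ (by positivity)]
        nlinarith [mul_le_mul (h₁ σv) (h₂ σv) (mul_nonneg hk.le hs₂) hP₁]
end
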